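/- arXiv:hep-th/0209134 — 3 statements merged into one kernel-verified Lean document; each statement's English description precedes it below -/
import Mathlib

section
/- Let g₁, g₂, g₃ ∈ SU(2) and set g₀ = 1 (the identity matrix). Let G be the real symmetric 4×4 matrix with entries G_IJ = (1/2)·Re tr(g_J g_I⁻¹) for I,J ∈ {0,1,2,3} (so G_II = 1). Then det G = (1/16)·( Re tr( (g₁g₂ − g₂g₁)·g₃ ) )². -/
/-!
Write `q(a, b) = !![a, b; -conj b, conj a]`, the matrix of the quaternion `a + b j`; every element
of `SU(2)` has this form, its inverse is its conjugate transpose, and `½ Re tr(q(c, d) q(a, b)ᴴ)`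
is the Euclidean inner product of `(a, b)` and `(c, d)` in `ℂ² = ℝ⁴`. Hence `G = V Vᵀ`, where the
rows of `V` are the coordinates of `1, g₁, g₂, g₃`, and `det G = (det V)²`. Expanding `det V` along
the row of `1` leaves the triple product of the imaginary parts of `g₁, g₂, g₃`, which is also
`-¼ Re tr([g₁, g₂] g₃)`, because the commutator of two quaternions is twice the cross product of
their imaginary parts.
-/

open Matrix Complex ComplexConjugate

def quatMat (a b : ℂ) : Matrix (Fin 2) (Fin 2) ℂ := !![a, b; -conj b, conj a]

def quatCoords (a b : ℂ) : Fin 4 → ℝ := ![a.re, a.im, b.re, b.im]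

theorem det_eq_det_submatrix_succ_of_row_zero {R : Type*} [CommRing R] {n : ℕ}
    (A : Matrix (Fin (n + 1)) (Fin (n + 1)) R) (h : A 0 = Pi.single 0 1) :
    A.det = (A.submatrix Fin.succ Fin.succ).det := by
  rw [det_succ_row_zero, Fin.sum_univ_succ]
  simp [h]

theorem star_quatMat (a b : ℂ) : star (quatMat a b) = quatMat (conj a) (-b) := by
  ext i j; fin_cases i <;> fin_cases j <;> simp [quatMat]

theorem re_trace_quatMat_mul_star (a b c d : ℂ) :
    (quatMat c d * star (quatMat a b)).trace.re = 2 * quatCoords a b ⬝ᵥ quatCoords c d := by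
  rw [star_quatMat]
  simp [quatMat, quatCoords, trace_fin_two, dotProduct, Fin.sum_univ_four]
  ring

theorem re_trace_commutator_quatMat_mul (a₁ b₁ a₂ b₂ a₃ b₃ : ℂ) :
    ((quatMat a₁ b₁ * quatMat a₂ b₂ - quatMat a₂ b₂ * quatMat a₁ b₁) * quatMat a₃ b₃).trace.re =
      -4 * det (of ![quatCoords 1 0, quatCoords a₁ b₁, quatCoords a₂ b₂, quatCoords a₃ b₃]) := by
  rw [det_eq_det_submatrix_succ_of_row_zero _ (by ext j; fin_cases j <;> simp [quatCoords]),
    det_fin_three]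
  simp [quatMat, quatCoords, trace_fin_two]
  ring

theorem star_eq_adjugate_of_mem_specialUnitaryGroup {n : Type*} [DecidableEq n] [Fintype n]
    {A : Matrix n n ℂ} (hA : A ∈ specialUnitaryGroup n ℂ) : star A = adjugate A := by
  have hdet : A.det = 1 := hA.2
  rw [← inv_eq_left_inv (mem_unitaryGroup_iff'.mp hA.1), Matrix.inv_def, hdet]
  simp

theorem eq_quatMat_of_mem_specialUnitaryGroup {A : Matrix (Fin 2) (Fin 2) ℂ}
    (hA : A ∈ specialUnitaryGroup (Fin 2) ℂ) : A = quatMat (A 0 0) (A 0 1) := by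
  have h := star_eq_adjugate_of_mem_specialUnitaryGroup hA
  have h00 := congrFun (congrFun h 0) 0
  have h10 := congrFun (congrFun h 1) 0
  simp only [star_apply, adjugate_fin_two, of_apply, cons_val', cons_val_zero, cons_val_one,
    empty_val', cons_val_fin_one, Complex.star_def] at h00 h10
  ext i j; fin_cases i <;> fin_cases j <;> simp [quatMat, ← h00, h10]

theorem half_re_trace_mul_inv_of_mem_specialUnitaryGroup {A B : Matrix (Fin 2) (Fin 2) ℂ}
    (hA : A ∈ specialUnitaryGroup (Fin 2) ℂ) (hB : B ∈ specialUnitaryGroup (Fin 2) ℂ) :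
    1 / 2 * (B * A⁻¹).trace.re = quatCoords (A 0 0) (A 0 1) ⬝ᵥ quatCoords (B 0 0) (B 0 1) := by
  rw [inv_eq_left_inv (mem_unitaryGroup_iff'.mp hA.1)]
  conv_lhs =>
    rw [eq_quatMat_of_mem_specialUnitaryGroup hB, eq_quatMat_of_mem_specialUnitaryGroup hA]
  rw [re_trace_quatMat_mul_star]
  ring

/-- For `g₁, g₂, g₃ ∈ SU(2)` and `g₀ = 1`, the determinant of the 4×4
Graham matrix `G_IJ = (1/2)·Re tr(g_J g_I⁻¹)` equals
`(1/16)·(Re tr([g₁,g₂] g₃))²`. -/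
theorem stmt9 (g₁ g₂ g₃ : Matrix.specialUnitaryGroup (Fin 2) ℂ)
    (gm : Fin 4 → Matrix (Fin 2) (Fin 2) ℂ)
    (hgm : gm = ![1, (g₁ : Matrix (Fin 2) (Fin 2) ℂ), (g₂ : Matrix (Fin 2) (Fin 2) ℂ),
      (g₃ : Matrix (Fin 2) (Fin 2) ℂ)])
    (G : Matrix (Fin 4) (Fin 4) ℝ)
    (hG : ∀ I J, G I J = 1 / 2 * ((gm J * (gm I)⁻¹).trace).re) :
    G.det = 1 / 16 *
      (((g₁ : Matrix (Fin 2) (Fin 2) ℂ) * (g₂ : Matrix (Fin 2) (Fin 2) ℂ) -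
          (g₂ : Matrix (Fin 2) (Fin 2) ℂ) * (g₁ : Matrix (Fin 2) (Fin 2) ℂ)) *
        (g₃ : Matrix (Fin 2) (Fin 2) ℂ)).trace.re ^ 2 := by
  have hmem : ∀ I, gm I ∈ specialUnitaryGroup (Fin 2) ℂ := by
    subst hgm
    intro I
    fin_cases I
    exacts [one_mem _, g₁.2, g₂.2, g₃.2]
  let V : Matrix (Fin 4) (Fin 4) ℝ := of fun I => quatCoords (gm I 0 0) (gm I 0 1)
  have hGram : G = V * Vᵀ := by
    ext I J
    rw [hG, half_re_trace_mul_inv_of_mem_specialUnitaryGroup (hmem I) (hmem J)]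
    rfl
  have hVrows : V = of ![quatCoords 1 0, quatCoords (g₁.1 0 0) (g₁.1 0 1),
      quatCoords (g₂.1 0 0) (g₂.1 0 1), quatCoords (g₃.1 0 0) (g₃.1 0 1)] := by
    ext I : 1
    subst hgm
    fin_cases I
    · simp [V]
    all_goals rfl
  have hdetV : -4 * V.det = (((g₁ : Matrix (Fin 2) (Fin 2) ℂ) * g₂ - g₂ * g₁) * g₃).trace.re := by
    rw [hVrows, ← re_trace_commutator_quatMat_mul, ← eq_quatMat_of_mem_specialUnitaryGroup g₁.2,
      ← eq_quatMat_of_mem_specialUnitaryGroup g₂.2, ← eq_quatMat_of_mem_specialUnitaryGroup g₃.2]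
  rw [hGram, det_mul, det_transpose, ← hdetV]
  ring
end

section
/- Small-angle behavior of the 4×4 Graham determinant: let (u_IJ)_{0≤I<J≤3} ∈ (0,∞)^6 and for S > 0 let G(S) be the 4×4 symmetric matrix with diagonal entries 1 and off-diagonal entries G_IJ(S) = cos(S·u_IJ). Then det G(S) / S⁶ converges, as S → 0⁺, to CM(u)/8, where CM(u) is the Cayley–Menger determinant of u. In particular, if u is realizable as the edge lengths of a Euclidean tetrahedron of volume V(u), the limit equals 36·V(u)² = (6V(u))². -/
open MeasureTheory Real Filter
open scoped ENNReal

noncomputable section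

/-- First endpoint of each of the six edges of a tetrahedron with vertices in `Fin 4`;
the edges are enumerated as `(0,1), (0,2), (0,3), (1,2), (1,3), (2,3)`. -/
def efst : Fin 6 → Fin 4 := ![0, 0, 0, 1, 1, 2]

/-- Second endpoint of each edge. -/
def esnd : Fin 6 → Fin 4 := ![1, 2, 3, 2, 3, 3]

/-- The opposite (dual) edge: `(I,J) ↦ (K,L)` with `{I,J,K,L} = {0,1,2,3}`. -/
def dualE : Fin 6 → Fin 6 := ![5, 4, 3, 2, 1, 0]

/-- Index of the edge joining two distinct vertices (junk value on the diagonal). -/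
def pairIdx : Fin 4 → Fin 4 → Fin 6 := fun I J =>
  ![![0, 0, 1, 2], ![0, 0, 3, 4], ![1, 3, 0, 5], ![2, 4, 5, 0]] I J

/-- The 4×4 Graham matrix with diagonal entries 1 and off-diagonal entries `cos θ_IJ`. -/
def graham (θ : Fin 6 → ℝ) : Matrix (Fin 4) (Fin 4) ℝ :=
  Matrix.of fun I J => if I = J then 1 else Real.cos (θ (pairIdx I J))

/-- The domain `D_π` of edge lengths of spherical tetrahedra. -/
def Dpi : Set (Fin 6 → ℝ) :=
  {θ | (∀ k, θ k ∈ Set.Icc (0 : ℝ) π) ∧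
    ∀ I J K : Fin 4, I ≠ J → J ≠ K → I ≠ K →
      θ (pairIdx I J) ≤ θ (pairIdx I K) + θ (pairIdx J K) ∧
      θ (pairIdx I J) + θ (pairIdx I K) + θ (pairIdx J K) ≤ 2 * π}

/-- The integrand of the 6j integral. -/
def sixjIntegrand (l θ : Fin 6 → ℝ) : ℝ :=
  (∏ k, Real.sin ((l k + 1) * θ k)) / Real.sqrt (graham θ).det

/-- `I(l)`: the square of the 6j symbol, as an integral over spherical tetrahedra. -/
def sixjI (l : Fin 6 → ℝ) : ℝ := 2 / π ^ 4 * ∫ θ in Dpi, sixjIntegrand l θ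

/-- `D^>_{π,ε} = D_π ∩ [ε, π-ε]^6`. -/
def Dgt (ε : ℝ) : Set (Fin 6 → ℝ) := Dpi ∩ {θ | ∀ k, θ k ∈ Set.Icc ε (π - ε)}

/-- `I^>_ε(l)`. -/
def Igt (ε : ℝ) (l : Fin 6 → ℝ) : ℝ := 2 / π ^ 4 * ∫ θ in Dgt ε, sixjIntegrand l θ

/-- `I^<_ε(l)`, the integral over `D^<_{π,ε} = D_π \ D^>_{π,ε}`. -/
def Ilt (ε : ℝ) (l : Fin 6 → ℝ) : ℝ := 2 / π ^ 4 * ∫ θ in Dpi \ Dgt ε, sixjIntegrand l θ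

/-- Euclidean dot product on `ℝ³`. -/
def dot3 (u v : Fin 3 → ℝ) : ℝ := ∑ i, u i * v i

/-- Euclidean norm on `ℝ³`. -/
def enorm3 (u : Fin 3 → ℝ) : ℝ := Real.sqrt (dot3 u u)

/-- Cross product on `ℝ³`. -/
def cross3 (u v : Fin 3 → ℝ) : Fin 3 → ℝ :=
  ![u 1 * v 2 - u 2 * v 1, u 2 * v 0 - u 0 * v 2, u 0 * v 1 - u 1 * v 0]

/-- Oriented volume of the tetrahedron with vertices `e 0, e 1, e 2, e 3`. -/
def orVol (e : Fin 4 → Fin 3 → ℝ) : ℝ :=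
  dot3 (cross3 (e 1 - e 0) (e 2 - e 0)) (e 3 - e 0) / 6

/-- The area vectors `A_I = (1/2)(e_J × e_K + e_K × e_L + e_L × e_J)`,
for `(I,J,K,L)` an even permutation of `(0,1,2,3)`. -/
def areaVec (e : Fin 4 → Fin 3 → ℝ) : Fin 4 → Fin 3 → ℝ :=
  ![(1 / 2 : ℝ) • (cross3 (e 1) (e 2) + cross3 (e 2) (e 3) + cross3 (e 3) (e 1)),
    (1 / 2 : ℝ) • (cross3 (e 0) (e 3) + cross3 (e 3) (e 2) + cross3 (e 2) (e 0)),
    (1 / 2 : ℝ) • (cross3 (e 0) (e 1) + cross3 (e 1) (e 3) + cross3 (e 3) (e 0)),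
    (1 / 2 : ℝ) • (cross3 (e 0) (e 2) + cross3 (e 2) (e 1) + cross3 (e 1) (e 0))]

/-- The (unoriented) angle between two vectors of `ℝ³`. -/
def angleB (u v : Fin 3 → ℝ) : ℝ := Real.arccos (dot3 u v / (enorm3 u * enorm3 v))

/-- The 5×5 Cayley–Menger matrix of a collection of six edge lengths. -/
def cayley (u : Fin 6 → ℝ) : Matrix (Fin 5) (Fin 5) ℝ :=
  Matrix.of fun I J =>
    if hI : (I : ℕ) < 4 then
      if hJ : (J : ℕ) < 4 then
        if I = J then 0 else u (pairIdx ⟨I, hI⟩ ⟨J, hJ⟩) ^ 2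
      else 1
    else if (J : ℕ) < 4 then 1 else 0

/-- The volume of a Euclidean tetrahedron as a function of its edge lengths,
via the Cayley–Menger determinant (`det C = 288 V²`). -/
def tetVolCM (u : Fin 6 → ℝ) : ℝ := Real.sqrt ((cayley u).det / 288)

/-- `D̃_∞`: the set of sextuples of positive reals realizable as the edge lengths of a
nondegenerate Euclidean tetrahedron in `ℝ³`. -/
def Dinf : Set (Fin 6 → ℝ) :=
  {u | (∀ k, 0 < u k) ∧ ∃ e : Fin 4 → Fin 3 → ℝ, AffineIndependent ℝ e ∧
        ∀ k, enorm3 (e (efst k) - e (esnd k)) = u k}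

namespace Stmt13Aux

/-- degree-6 coefficient polynomial -/
def Apoly (r : Fin 6 → ℝ) : ℝ :=
  (-16) * r 0 ^ 4 * r 5 ^ 2
      + (-16) * r 0 ^ 2 * r 1 ^ 2 * r 3 ^ 2
      + 16 * r 0 ^ 2 * r 1 ^ 2 * r 4 ^ 2
      + 16 * r 0 ^ 2 * r 1 ^ 2 * r 5 ^ 2
      + 16 * r 0 ^ 2 * r 2 ^ 2 * r 3 ^ 2
      + (-16) * r 0 ^ 2 * r 2 ^ 2 * r 4 ^ 2
      + 16 * r 0 ^ 2 * r 2 ^ 2 * r 5 ^ 2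
      + 16 * r 0 ^ 2 * r 3 ^ 2 * r 5 ^ 2
      + 16 * r 0 ^ 2 * r 4 ^ 2 * r 5 ^ 2
      + (-16) * r 0 ^ 2 * r 5 ^ 4
      + (-16) * r 1 ^ 4 * r 4 ^ 2
      + 16 * r 1 ^ 2 * r 2 ^ 2 * r 3 ^ 2
      + 16 * r 1 ^ 2 * r 2 ^ 2 * r 4 ^ 2
      + (-16) * r 1 ^ 2 * r 2 ^ 2 * r 5 ^ 2
      + 16 * r 1 ^ 2 * r 3 ^ 2 * r 4 ^ 2
      + (-16) * r 1 ^ 2 * r 4 ^ 4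
      + 16 * r 1 ^ 2 * r 4 ^ 2 * r 5 ^ 2
      + (-16) * r 2 ^ 4 * r 3 ^ 2
      + (-16) * r 2 ^ 2 * r 3 ^ 4
      + 16 * r 2 ^ 2 * r 3 ^ 2 * r 4 ^ 2
      + 16 * r 2 ^ 2 * r 3 ^ 2 * r 5 ^ 2
      + (-16) * r 3 ^ 2 * r 4 ^ 2 * r 5 ^ 2

/-- degree-8 coefficient polynomial -/
def Bpoly (r : Fin 6 → ℝ) : ℝ :=
  16 * r 0 ^ 4 * r 5 ^ 4
      + (-32) * r 0 ^ 2 * r 1 ^ 2 * r 4 ^ 2 * r 5 ^ 2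
      + (-32) * r 0 ^ 2 * r 2 ^ 2 * r 3 ^ 2 * r 5 ^ 2
      + 16 * r 1 ^ 4 * r 4 ^ 4
      + (-32) * r 1 ^ 2 * r 2 ^ 2 * r 3 ^ 2 * r 4 ^ 2
      + 16 * r 2 ^ 4 * r 3 ^ 4

lemma continuous_Apoly : Continuous Apoly := by unfold Apoly; fun_prop

lemma continuous_Bpoly : Continuous Bpoly := by unfold Bpoly; fun_prop

lemma lem_graham (θ : Fin 6 → ℝ) :
    (graham θ).det =
      Real.cos (θ 0) ^ 2 * Real.cos (θ 5) ^ 2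
      + (-1) * Real.cos (θ 0) ^ 2
      + 2 * Real.cos (θ 0) * Real.cos (θ 1) * Real.cos (θ 3)
      + (-2) * Real.cos (θ 0) * Real.cos (θ 1) * Real.cos (θ 4) * Real.cos (θ 5)
      + (-2) * Real.cos (θ 0) * Real.cos (θ 2) * Real.cos (θ 3) * Real.cos (θ 5)
      + 2 * Real.cos (θ 0) * Real.cos (θ 2) * Real.cos (θ 4)
      + Real.cos (θ 1) ^ 2 * Real.cos (θ 4) ^ 2
      + (-1) * Real.cos (θ 1) ^ 2
      + (-2) * Real.cos (θ 1) * Real.cos (θ 2) * Real.cos (θ 3) * Real.cos (θ 4)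
      + 2 * Real.cos (θ 1) * Real.cos (θ 2) * Real.cos (θ 5)
      + Real.cos (θ 2) ^ 2 * Real.cos (θ 3) ^ 2
      + (-1) * Real.cos (θ 2) ^ 2
      + (-1) * Real.cos (θ 3) ^ 2
      + 2 * Real.cos (θ 3) * Real.cos (θ 4) * Real.cos (θ 5)
      + (-1) * Real.cos (θ 4) ^ 2
      + (-1) * Real.cos (θ 5) ^ 2
      + 1 := by
  simp (config := { decide := true }) [graham, pairIdx, Matrix.det_succ_row_zero,
    Fin.sum_univ_succ, Fin.succAbove, Fin.castSucc, Fin.castAdd, Fin.castLE, Fin.succ]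
  ring

set_option maxHeartbeats 4000000 in
lemma lem_cayley (u : Fin 6 → ℝ) :
    (cayley u).det =
      (-2) * u 0 ^ 4 * u 5 ^ 2
      + (-2) * u 0 ^ 2 * u 1 ^ 2 * u 3 ^ 2
      + 2 * u 0 ^ 2 * u 1 ^ 2 * u 4 ^ 2
      + 2 * u 0 ^ 2 * u 1 ^ 2 * u 5 ^ 2
      + 2 * u 0 ^ 2 * u 2 ^ 2 * u 3 ^ 2
      + (-2) * u 0 ^ 2 * u 2 ^ 2 * u 4 ^ 2
      + 2 * u 0 ^ 2 * u 2 ^ 2 * u 5 ^ 2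
      + 2 * u 0 ^ 2 * u 3 ^ 2 * u 5 ^ 2
      + 2 * u 0 ^ 2 * u 4 ^ 2 * u 5 ^ 2
      + (-2) * u 0 ^ 2 * u 5 ^ 4
      + (-2) * u 1 ^ 4 * u 4 ^ 2
      + 2 * u 1 ^ 2 * u 2 ^ 2 * u 3 ^ 2
      + 2 * u 1 ^ 2 * u 2 ^ 2 * u 4 ^ 2
      + (-2) * u 1 ^ 2 * u 2 ^ 2 * u 5 ^ 2
      + 2 * u 1 ^ 2 * u 3 ^ 2 * u 4 ^ 2
      + (-2) * u 1 ^ 2 * u 4 ^ 4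
      + 2 * u 1 ^ 2 * u 4 ^ 2 * u 5 ^ 2
      + (-2) * u 2 ^ 4 * u 3 ^ 2
      + (-2) * u 2 ^ 2 * u 3 ^ 4
      + 2 * u 2 ^ 2 * u 3 ^ 2 * u 4 ^ 2
      + 2 * u 2 ^ 2 * u 3 ^ 2 * u 5 ^ 2
      + (-2) * u 3 ^ 2 * u 4 ^ 2 * u 5 ^ 2 := by
  have h : cayley u = !![0, u 0 ^ 2, u 1 ^ 2, u 2 ^ 2, 1;
      u 0 ^ 2, 0, u 3 ^ 2, u 4 ^ 2, 1;
      u 1 ^ 2, u 3 ^ 2, 0, u 5 ^ 2, 1;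
      u 2 ^ 2, u 4 ^ 2, u 5 ^ 2, 0, 1;
      1, 1, 1, 1, 0] := by
    ext I J
    fin_cases I <;> fin_cases J <;> rfl
  rw [h]
  simp (config := { decide := true }) [Matrix.det_succ_row_zero, Fin.sum_univ_succ,
    Fin.succAbove, Fin.castSucc, Fin.castAdd, Fin.castLE, Fin.succ,
    show ((3:Fin 4):ℕ) = 3 from rfl, show ((2:Fin 4):ℕ) = 2 from rfl,
    show ∀ h : (3:ℕ) < 5, (⟨3,h⟩:Fin 5) = 3 from fun _ => rfl,
    show ∀ h : (2:ℕ) < 5, (⟨2,h⟩:Fin 5) = 2 from fun _ => rfl,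
    show ∀ h : (1:ℕ) < 5, (⟨1,h⟩:Fin 5) = 1 from fun _ => rfl]
  ring

lemma cos_eq_one_sub (x : ℝ) : Real.cos x = 1 - 2 * Real.sin (x / 2) ^ 2 := by
  have h1 : Real.cos (2 * (x / 2)) = 2 * Real.cos (x / 2) ^ 2 - 1 := Real.cos_two_mul _
  have h2 : Real.sin (x / 2) ^ 2 + Real.cos (x / 2) ^ 2 = 1 := Real.sin_sq_add_cos_sq _
  rw [show 2 * (x / 2) = x by ring] at h1
  linarith

lemma sinlim (a : ℝ) (ha : 0 < a) :
    Tendsto (fun S : ℝ => Real.sin (S * a / 2) / S) (nhdsWithin 0 (Set.Ioi 0)) (nhds (a / 2)) := by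
  have hd : Tendsto (fun y : ℝ => Real.sin y / y) (nhdsWithin 0 {(0:ℝ)}ᶜ) (nhds 1) := by
    have h := Real.hasDerivAt_sin 0
    rw [hasDerivAt_iff_tendsto_slope] at h
    rw [Real.cos_zero] at h
    refine h.congr fun y => ?_
    simp [slope_def_field]
  have hmap : Tendsto (fun S : ℝ => S * a / 2) (nhdsWithin 0 (Set.Ioi 0))
      (nhdsWithin 0 {(0:ℝ)}ᶜ) := by
    apply tendsto_nhdsWithin_of_tendsto_nhds_of_eventually_within
    · have hc : Continuous fun S : ℝ => S * a / 2 := by fun_prop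
      have h0 : Tendsto (fun S : ℝ => S * a / 2) (nhds 0) (nhds 0) := by
        simpa using hc.tendsto 0
      exact h0.mono_left nhdsWithin_le_nhds
    · filter_upwards [self_mem_nhdsWithin] with S hS
      have hpos : 0 < S * a / 2 := by
        have : (0:ℝ) < S := hS
        positivity
      simpa using hpos.ne'
  have hcomp : Tendsto (fun S : ℝ => Real.sin (S * a / 2) / (S * a / 2))
      (nhdsWithin 0 (Set.Ioi 0)) (nhds 1) := hd.comp hmap
  have hmul := hcomp.const_mul (a / 2)
  rw [mul_one] at hmul
  refine Tendsto.congr' ?_ hmul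
  filter_upwards [self_mem_nhdsWithin] with S hS
  have hS0 : S ≠ 0 := ne_of_gt hS
  field_simp

end Stmt13Aux

set_option maxHeartbeats 4000000 in
/-- Small-angle behavior of the 4×4 Graham determinant:
`det G(S)/S⁶ → CM(u)/8` as `S → 0⁺`; and if `u` is realizable as the edge lengths of a
Euclidean tetrahedron of volume `V(u)`, the limit equals `36 V(u)² = (6V(u))²`. -/
theorem stmt13 (u : Fin 6 → ℝ) (hu : ∀ k, 0 < u k) :
    Tendsto (fun S : ℝ => (graham (S • u)).det / S ^ 6)
        (nhdsWithin 0 (Set.Ioi 0)) (nhds ((cayley u).det / 8)) ∧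
      ∀ e : Fin 4 → Fin 3 → ℝ, (∀ k, enorm3 (e (efst k) - e (esnd k)) = u k) →
        (cayley u).det / 8 = 36 * orVol e ^ 2 := by
  open Stmt13Aux in
  constructor
  · -- the limit
    have key : ∀ᶠ S in nhdsWithin (0:ℝ) (Set.Ioi 0),
        Apoly (fun k => Real.sin (S * u k / 2) / S)
          + S ^ 2 * Bpoly (fun k => Real.sin (S * u k / 2) / S)
          = (graham (S • u)).det / S ^ 6 := by
      filter_upwards [self_mem_nhdsWithin] with S hS
      have hS0 : S ≠ 0 := ne_of_gt hS
      rw [lem_graham]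
      simp only [Pi.smul_apply, smul_eq_mul, cos_eq_one_sub, Apoly, Bpoly]
      field_simp
      ring
    have hr : Tendsto (fun S : ℝ => (fun k => Real.sin (S * u k / 2) / S : Fin 6 → ℝ))
        (nhdsWithin 0 (Set.Ioi 0)) (nhds (fun k => u k / 2)) :=
      tendsto_pi_nhds.2 fun k => sinlim (u k) (hu k)
    have hA := (continuous_Apoly.tendsto _).comp hr
    have hB := (continuous_Bpoly.tendsto _).comp hr
    have hS2 : Tendsto (fun S : ℝ => S ^ 2) (nhdsWithin 0 (Set.Ioi 0)) (nhds 0) :=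
      ((continuous_pow 2).tendsto' (0:ℝ) 0 (by norm_num)).mono_left nhdsWithin_le_nhds
    have hmain := hA.add (hS2.mul hB)
    have hval : Apoly (fun k => u k / 2) + 0 * Bpoly (fun k => u k / 2)
        = (cayley u).det / 8 := by
      rw [lem_cayley]
      simp only [Apoly, Bpoly]
      ring
    rw [hval] at hmain
    exact Tendsto.congr' key hmain
  · -- the Cayley–Menger identity
    intro e he
    have hsq : ∀ k, u k ^ 2 = dot3 (e (efst k) - e (esnd k)) (e (efst k) - e (esnd k)) := by
      intro k
      rw [← he k]
      unfold enorm3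
      rw [Real.sq_sqrt]
      unfold dot3
      exact Finset.sum_nonneg fun i _ => mul_self_nonneg _
    have h0 := hsq 0; have h1 := hsq 1; have h2 := hsq 2
    have h3 := hsq 3; have h4 := hsq 4; have h5 := hsq 5
    simp only [show efst 0 = 0 from rfl, show esnd 0 = 1 from rfl] at h0
    simp only [show efst 1 = 0 from rfl, show esnd 1 = 2 from rfl] at h1
    simp only [show efst 2 = 0 from rfl, show esnd 2 = 3 from rfl] at h2
    simp only [show efst 3 = 1 from rfl, show esnd 3 = 2 from rfl] at h3
    simp only [show efst 4 = 1 from rfl, show esnd 4 = 3 from rfl] at h4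
    simp only [show efst 5 = 2 from rfl, show esnd 5 = 3 from rfl] at h5
    rw [lem_cayley]
    simp only [show ∀ a : ℝ, a ^ 4 = (a ^ 2) ^ 2 from fun a => by ring]
    rw [h0, h1, h2, h3, h4, h5]
    simp only [dot3, orVol, cross3, Fin.sum_univ_three, Pi.sub_apply,
      Matrix.cons_val_zero, Matrix.cons_val_one, Matrix.head_cons,
      show ∀ x : Fin 3 → ℝ, x 2 = x 2 from fun _ => rfl,
      Matrix.cons_val_two, Matrix.tail_cons]
    ring
end
end

section
/- Small-angle behavior of the 5×5 Graham determinant: let (u_IJ)_{0≤I<J≤4} ∈ (0,∞)^{10} be realizable as the edge lengths of a nondegenerate Euclidean 4-simplex in ℝ⁴ with volume V₄(u), and for S > 0 let G(S) be the 5×5 symmetric matrix with diagonal entries 1 and off-diagonal entries G_IJ(S) = cos(S·u_IJ). Then det G(S) / S⁸ converges, as S → 0⁺, to (4!·V₄(u))² = (24·V₄(u))². -/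
open Real Filter

noncomputable section

/-- First endpoint of each of the ten edges of a 4-simplex with vertices in `Fin 5`;
the edges are enumerated as
`(0,1),(0,2),(0,3),(0,4),(1,2),(1,3),(1,4),(2,3),(2,4),(3,4)`. -/
def efst5 : Fin 10 → Fin 5 := ![0, 0, 0, 0, 1, 1, 1, 2, 2, 3]

/-- Second endpoint of each edge. -/
def esnd5 : Fin 10 → Fin 5 := ![1, 2, 3, 4, 2, 3, 4, 3, 4, 4]

/-- The 5×5 Graham matrix with diagonal entries 1 and off-diagonal entries `cos θ_IJ`. -/
def graham5 (θ : Fin 10 → ℝ) : Matrix (Fin 5) (Fin 5) ℝ :=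
  Matrix.of fun I J =>
    if I = J then 1 else
      Real.cos (θ (![![0, 0, 1, 2, 3], ![0, 0, 4, 5, 6], ![1, 4, 0, 7, 8],
        ![2, 5, 7, 0, 9], ![3, 6, 8, 9, 0]] I J))

/-- Euclidean dot product on `ℝ⁴`. -/
def dot4 (u v : Fin 4 → ℝ) : ℝ := ∑ i, u i * v i

/-- Euclidean norm on `ℝ⁴`. -/
def enorm4 (u : Fin 4 → ℝ) : ℝ := Real.sqrt (dot4 u u)

/-- The 4-dimensional volume of the 4-simplex with vertices `e 0, …, e 4` in `ℝ⁴`: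
`V₄ = |det(e₁-e₀, …, e₄-e₀)|/4!`. -/
def vol4 (e : Fin 5 → Fin 4 → ℝ) : ℝ :=
  |(Matrix.of fun i j : Fin 4 => (e j.succ - e 0) i).det| / 24

set_option maxHeartbeats 3200000
set_option maxRecDepth 64000

section Aux

lemma tendsto_sin_div' : Tendsto (fun x : ℝ => sin x / x) (nhdsWithin 0 {x | x ≠ 0}) (nhds 1) := by
  have h := hasDerivAt_iff_tendsto_slope.mp (Real.hasDerivAt_sin 0)
  simp only [Real.cos_zero] at h
  refine h.congr' ?_
  filter_upwards [self_mem_nhdsWithin] with x hx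
  simp [slope_def_field, div_eq_inv_mul]

lemma key_cos (a : ℝ) (ha : 0 < a) :
    Tendsto (fun S : ℝ => (cos (S * a) - 1) / S ^ 2) (nhdsWithin 0 (Set.Ioi 0))
      (nhds (-(a ^ 2 / 2))) := by
  have hmap : Tendsto (fun S : ℝ => S * a / 2) (nhdsWithin 0 (Set.Ioi 0))
      (nhdsWithin 0 {x | x ≠ 0}) := by
    refine tendsto_nhdsWithin_of_tendsto_nhds_of_eventually_within _ ?_ ?_
    · have : Tendsto (fun S : ℝ => S * a / 2) (nhds 0) (nhds (0 * a / 2)) := by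
        exact (continuous_id.mul continuous_const).div_const 2 |>.tendsto 0
      simpa using this.mono_left nhdsWithin_le_nhds
    · filter_upwards [self_mem_nhdsWithin] with S hS
      have : (0:ℝ) < S := hS
      positivity
  have h1 : Tendsto (fun S : ℝ => -(a^2/2) * (sin (S*a/2) / (S*a/2)) ^ 2)
      (nhdsWithin 0 (Set.Ioi 0)) (nhds (-(a^2/2) * 1^2)) :=
    tendsto_const_nhds.mul ((tendsto_sin_div'.comp hmap).pow 2)
  rw [show (-(a^2/2) * 1^2 : ℝ) = -(a^2/2) by ring] at h1
  refine h1.congr' ?_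
  filter_upwards [self_mem_nhdsWithin] with S hS
  have hS0 : (0:ℝ) < S := hS
  have hsq : sin (S*a/2) ^ 2 = 1/2 - cos (S*a) / 2 := by
    have := sin_sq_eq_half_sub (S*a/2)
    rwa [show 2 * (S*a/2) = S*a by ring] at this
  rw [div_pow, hsq]
  field_simp
  ring

lemma key_cos1 (a : ℝ) (ha : 0 < a) :
    Tendsto (fun S : ℝ => (cos (S * a) - 1) / S) (nhdsWithin 0 (Set.Ioi 0)) (nhds 0) := by
  have h1 : Tendsto (fun S : ℝ => S * ((cos (S * a) - 1) / S ^ 2))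
      (nhdsWithin 0 (Set.Ioi 0)) (nhds (0 * -(a^2/2))) :=
    (tendsto_id.mono_left nhdsWithin_le_nhds).mul (key_cos a ha)
  rw [show (0 * -(a^2/2) : ℝ) = 0 by ring] at h1
  refine h1.congr' ?_
  filter_upwards [self_mem_nhdsWithin] with S hS
  have hS0 : S ≠ 0 := ne_of_gt hS
  field_simp

lemma tendsto_entry (a b c : ℝ) (ha : 0 < a) (hb : 0 < b) (hc : 0 < c) :
    Tendsto (fun S : ℝ => (cos (S * a) - cos (S * b) - cos (S * c) + 1) / S ^ 2)
      (nhdsWithin 0 (Set.Ioi 0)) (nhds (-(a ^ 2 / 2) + b ^ 2 / 2 + c ^ 2 / 2)) := by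
  have h := ((key_cos a ha).sub (key_cos b hb)).sub (key_cos c hc)
  rw [show -(a^2/2) - -(b^2/2) - -(c^2/2) = -(a^2/2) + b^2/2 + c^2/2 by ring] at h
  exact h.congr fun S => by ring

lemma tendsto_entry_diag (b : ℝ) (hb : 0 < b) :
    Tendsto (fun S : ℝ => (1 - cos (S * b) - cos (S * b) + 1) / S ^ 2)
      (nhdsWithin 0 (Set.Ioi 0)) (nhds (b ^ 2)) := by
  have h := ((key_cos b hb).neg).sub (key_cos b hb)
  rw [show - -(b^2/2) - -(b^2/2) = b^2 by ring] at h
  exact h.congr fun S => by ring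

/-- The index table used in `graham5`. -/
def tbl : Fin 5 → Fin 5 → Fin 10 :=
  ![![0, 0, 1, 2, 3], ![0, 0, 4, 5, 6], ![1, 4, 0, 7, 8], ![2, 5, 7, 0, 9], ![3, 6, 8, 9, 0]]

/-- Row/column reduction matrix. -/
def Lmat : Matrix (Fin 5) (Fin 5) ℝ :=
  Matrix.of fun I J => if I = J then 1 else if J = 0 then -1 else 0

/-- Scaling matrix `diag(1,S,S,S,S)`. -/
def Dmat (S : ℝ) : Matrix (Fin 5) (Fin 5) ℝ := Matrix.diagonal ![1, S, S, S, S]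

/-- The rescaled reduced Graham matrix, with entries continuous down to `S = 0`. -/
def Bmat (u : Fin 10 → ℝ) (S : ℝ) : Matrix (Fin 5) (Fin 5) ℝ := Matrix.of fun I J =>
  if I = 0 then (if J = 0 then 1 else (Real.cos (S * u (tbl 0 J)) - 1) / S)
  else if J = 0 then (Real.cos (S * u (tbl I 0)) - 1) / S
  else ((if I = J then 1 else Real.cos (S * u (tbl I J))) - Real.cos (S * u (tbl I 0))
    - Real.cos (S * u (tbl 0 J)) + 1) / S ^ 2

/-- The limit of `Bmat u S` as `S → 0⁺`. -/
def B0 (u : Fin 10 → ℝ) : Matrix (Fin 5) (Fin 5) ℝ := Matrix.of fun I J =>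
  if I = 0 then (if J = 0 then 1 else 0)
  else if J = 0 then 0
  else (if I = J then 0 else -(u (tbl I J) ^ 2 / 2)) + u (tbl I 0) ^ 2 / 2 + u (tbl 0 J) ^ 2 / 2

lemma main_identity (u : Fin 10 → ℝ) (S : ℝ) (hS : S ≠ 0) :
    Lmat * graham5 (S • u) * Lmat.transpose = Dmat S * Bmat u S * Dmat S := by
  ext I J
  fin_cases I <;> fin_cases J <;>
    simp [Lmat, Dmat, Bmat, graham5, tbl, Matrix.mul_apply, Fin.sum_univ_five,
      Matrix.diagonal, Matrix.transpose_apply, Fin.isValue] <;>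
    (field_simp; ring)

lemma detL : Lmat.det = 1 := by
  rw [Matrix.det_of_lowerTriangular]
  · simp [Lmat]
  · intro i j hij
    fin_cases i <;> fin_cases j <;> simp_all [Lmat] <;> exact absurd hij (by decide)

lemma detD (S : ℝ) : (Dmat S).det = S ^ 4 := by
  simp [Dmat, Matrix.det_diagonal, Fin.prod_univ_five]
  ring

lemma det_factor (u : Fin 10 → ℝ) (S : ℝ) (hS : S ≠ 0) :
    (graham5 (S • u)).det = S ^ 8 * (Bmat u S).det := by
  have h := congrArg Matrix.det (main_identity u S hS)
  rw [Matrix.det_mul, Matrix.det_mul, Matrix.det_mul, Matrix.det_mul, detL,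
    Matrix.det_transpose, detL, detD] at h
  rw [show (1:ℝ) * (graham5 (S • u)).det * 1 = (graham5 (S • u)).det by ring] at h
  rw [h]; ring

lemma tendsto_Bmat (u : Fin 10 → ℝ) (hu : ∀ k, 0 < u k) :
    Tendsto (fun S => Bmat u S) (nhdsWithin 0 (Set.Ioi 0)) (nhds (B0 u)) := by
  refine tendsto_pi_nhds.mpr fun I => tendsto_pi_nhds.mpr fun J => ?_
  fin_cases I <;> fin_cases J <;> simp [Bmat, B0, tbl]
  · exact key_cos1 _ (hu _)
  · exact key_cos1 _ (hu _)
  · exact key_cos1 _ (hu _)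
  · exact key_cos1 _ (hu _)
  · exact key_cos1 _ (hu _)
  · exact tendsto_entry_diag _ (hu _)
  · exact tendsto_entry _ _ _ (hu _) (hu _) (hu _)
  · exact tendsto_entry _ _ _ (hu _) (hu _) (hu _)
  · exact tendsto_entry _ _ _ (hu _) (hu _) (hu _)
  · exact key_cos1 _ (hu _)
  · exact tendsto_entry _ _ _ (hu _) (hu _) (hu _)
  · exact tendsto_entry_diag _ (hu _)
  · exact tendsto_entry _ _ _ (hu _) (hu _) (hu _)
  · exact tendsto_entry _ _ _ (hu _) (hu _) (hu _)
  · exact key_cos1 _ (hu _)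
  · exact tendsto_entry _ _ _ (hu _) (hu _) (hu _)
  · exact tendsto_entry _ _ _ (hu _) (hu _) (hu _)
  · exact tendsto_entry_diag _ (hu _)
  · exact tendsto_entry _ _ _ (hu _) (hu _) (hu _)
  · exact key_cos1 _ (hu _)
  · exact tendsto_entry _ _ _ (hu _) (hu _) (hu _)
  · exact tendsto_entry _ _ _ (hu _) (hu _) (hu _)
  · exact tendsto_entry _ _ _ (hu _) (hu _) (hu _)
  · exact tendsto_entry_diag _ (hu _)

lemma detB0 (u : Fin 10 → ℝ) (e : Fin 5 → Fin 4 → ℝ)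
    (hlen : ∀ k, enorm4 (e (efst5 k) - e (esnd5 k)) = u k) :
    (B0 u).det = (24 * vol4 e) ^ 2 := by
  have hsq : ∀ k, u k ^ 2 = dot4 (e (efst5 k) - e (esnd5 k)) (e (efst5 k) - e (esnd5 k)) := by
    intro k
    rw [← hlen k, enorm4, sq_sqrt]
    exact Finset.sum_nonneg fun i _ => mul_self_nonneg _
  have h0 : u 0 ^ 2 = dot4 (e 0 - e 1) (e 0 - e 1) := hsq 0
  have h1 : u 1 ^ 2 = dot4 (e 0 - e 2) (e 0 - e 2) := hsq 1
  have h2 : u 2 ^ 2 = dot4 (e 0 - e 3) (e 0 - e 3) := hsq 2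
  have h3 : u 3 ^ 2 = dot4 (e 0 - e 4) (e 0 - e 4) := hsq 3
  have h4 : u 4 ^ 2 = dot4 (e 1 - e 2) (e 1 - e 2) := hsq 4
  have h5 : u 5 ^ 2 = dot4 (e 1 - e 3) (e 1 - e 3) := hsq 5
  have h6 : u 6 ^ 2 = dot4 (e 1 - e 4) (e 1 - e 4) := hsq 6
  have h7 : u 7 ^ 2 = dot4 (e 2 - e 3) (e 2 - e 3) := hsq 7
  have h8 : u 8 ^ 2 = dot4 (e 2 - e 4) (e 2 - e 4) := hsq 8
  have h9 : u 9 ^ 2 = dot4 (e 3 - e 4) (e 3 - e 4) := hsq 9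
  have s0 : Fin.succ (0 : Fin 4) = (1 : Fin 5) := rfl
  have s1 : Fin.succ (1 : Fin 4) = (2 : Fin 5) := rfl
  have s2 : Fin.succ (2 : Fin 4) = (3 : Fin 5) := rfl
  have s3 : Fin.succ (3 : Fin 4) = (4 : Fin 5) := rfl
  set M : Matrix (Fin 4) (Fin 4) ℝ := Matrix.of fun i j : Fin 4 => (e j.succ - e 0) i with hM
  have hsub : (B0 u).submatrix Fin.succ Fin.succ = M.transpose * M := by
    ext i j
    fin_cases i <;> fin_cases j <;>
      simp [B0, tbl, hM, Matrix.mul_apply, Matrix.transpose_apply, Fin.sum_univ_four,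
        s0, s1, s2, s3, h0, h1, h2, h3, h4, h5, h6, h7, h8, h9, dot4] <;> ring
  have hdet1 : (B0 u).det = ((B0 u).submatrix Fin.succ Fin.succ).det := by
    rw [Matrix.det_succ_row_zero]
    simp [Fin.sum_univ_five, B0, tbl]
  rw [hdet1, hsub, Matrix.det_mul, Matrix.det_transpose, vol4, ← hM]
  rw [show 24 * (|M.det| / 24) = |M.det| by ring, sq_abs]
  ring

end Aux

/-- Small-angle behavior of the 5×5 Graham determinant: if `u` is
realizable as the edge lengths of a nondegenerate Euclidean 4-simplex of volume
`V₄(u)`, then `det G(S)/S⁸ → (4!·V₄(u))² = (24 V₄(u))²` as `S → 0⁺`. -/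
theorem stmt14 (u : Fin 10 → ℝ) (hu : ∀ k, 0 < u k)
    (e : Fin 5 → Fin 4 → ℝ) (he : AffineIndependent ℝ e)
    (hlen : ∀ k, enorm4 (e (efst5 k) - e (esnd5 k)) = u k) :
    Tendsto (fun S : ℝ => (graham5 (S • u)).det / S ^ 8)
      (nhdsWithin 0 (Set.Ioi 0)) (nhds ((24 * vol4 e) ^ 2)) := by
  have hB := tendsto_Bmat u hu
  have hdet : Tendsto (fun S => (Bmat u S).det) (nhdsWithin 0 (Set.Ioi 0))
      (nhds ((B0 u).det)) :=
    ((Continuous.matrix_det continuous_id).tendsto (B0 u)).comp hB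
  rw [detB0 u e hlen] at hdet
  refine hdet.congr' ?_
  filter_upwards [self_mem_nhdsWithin] with S hS
  have hS0 : S ≠ 0 := ne_of_gt hS
  rw [det_factor u S hS0]
  field_simp
end
end
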